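/- Let ν ∈ ℤ_{>0}^m and μ ∈ ℤ_{>0}^n with ∑_{i∈I} ν_i = ∑_{j∈J} μ_j, and let d ≥ 1. Suppose there exist partitions I = I_1 ⊔ ⋯ ⊔ I_d and J = J_1 ⊔ ⋯ ⊔ J_d into nonempty sets with ∑_{i∈I_l} ν_i = ∑_{j∈J_l} μ_j for every l ∈ {1,…,d}. Then there exists E ⊆ I × J such that T_E(ν,μ) is nonempty, the ERP number of T_E(ν,μ) equals d, and |E| = m + n − d if d ≥ d_⋆ while |E| = m + n − d + 1 if d < d_⋆. -/

import Mathlib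

open scoped Classical

noncomputable section

variable {m n : ℕ}

/-- The transportation polytope `T_E(ν,μ)`: nonnegative `m × n` matrices with row sums `ν`,
column sums `μ`, supported on the edge set `E`. -/
def transportationPolytope (ν : Fin m → ℝ) (μ : Fin n → ℝ)
    (E : Finset (Fin m × Fin n)) : Set (Fin m → Fin n → ℝ) :=
  {x | (∀ i j, 0 ≤ x i j) ∧ (∀ i, ∑ j, x i j = ν i) ∧
    (∀ j, ∑ i, x i j = μ j) ∧ ∀ i j, (i, j) ∉ E → x i j = 0}

/-- The neighborhood `N_F(S) = {j : ∃ i ∈ S, (i,j) ∈ F}`. -/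
def nbr (F : Finset (Fin m × Fin n)) (S : Finset (Fin m)) : Finset (Fin n) :=
  Finset.univ.filter fun j => ∃ i ∈ S, (i, j) ∈ F

/-- `ν` satisfies the capacity condition for `(μ, E)`. -/
def capacityCond (ν : Fin m → ℝ) (μ : Fin n → ℝ) (E : Finset (Fin m × Fin n)) : Prop :=
  ∀ S : Finset (Fin m), ∑ i ∈ S, ν i ≤ ∑ j ∈ nbr E S, μ j

/-- The CRP condition for `(ν, μ, E)`. -/
def crpCond (ν : Fin m → ℝ) (μ : Fin n → ℝ) (E : Finset (Fin m × Fin n)) : Prop :=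
  (∑ i, ν i) = (∑ j, μ j) ∧
  ∀ S : Finset (Fin m), S.Nonempty → S ≠ Finset.univ →
    ∑ i ∈ S, ν i < ∑ j ∈ nbr E S, μ j

/-- The bipartite simple graph `G(F)` on `I ⊔ J` determined by the edge set `F`. -/
def bipartiteGraph (F : Finset (Fin m × Fin n)) : SimpleGraph (Fin m ⊕ Fin n) :=
  SimpleGraph.fromRel fun u v => ∃ i j, u = Sum.inl i ∧ v = Sum.inr j ∧ (i, j) ∈ F

/-- The number of connected components of `G(F)`. -/
def numComponents (F : Finset (Fin m × Fin n)) : ℕ :=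
  Nat.card (bipartiteGraph F).ConnectedComponent

/-- The set `E_r` of redundant edges of `T_E(ν,μ)`. -/
def redundantEdges (ν : Fin m → ℝ) (μ : Fin n → ℝ)
    (E : Finset (Fin m × Fin n)) : Finset (Fin m × Fin n) :=
  E.filter fun e => ∀ x ∈ transportationPolytope ν μ E, x e.1 e.2 = 0

/-- The ERP number of `T_E(ν,μ)`: the number of connected components of `G(E ∖ E_r)`. -/
def erpNumber (ν : Fin m → ℝ) (μ : Fin n → ℝ) (E : Finset (Fin m × Fin n)) : ℕ :=
  numComponents (E \ redundantEdges ν μ E)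

/-- The support edge set `B(x) = {(i,j) ∈ E : x_{ij} > 0}`. -/
def supportEdges (E : Finset (Fin m × Fin n)) (x : Fin m → Fin n → ℝ) :
    Finset (Fin m × Fin n) :=
  E.filter fun e => 0 < x e.1 e.2

/-- The indicator vector `𝟙_S ∈ ℝ^m` of `S ⊆ I`. -/
def indicatorVec (S : Finset (Fin m)) : Fin m → ℝ := fun i => if i ∈ S then 1 else 0

/-- `S ⊆ I` is binding if `∑_{i∈S} ν_i = ∑_{j∈N_E(S)} μ_j`. -/
def IsBinding (ν : Fin m → ℝ) (μ : Fin n → ℝ) (E : Finset (Fin m × Fin n))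
    (S : Finset (Fin m)) : Prop :=
  (∑ i ∈ S, ν i) = ∑ j ∈ nbr E S, μ j

/-- The greatest common divisor of all `m + n` components of `ν` and `μ`. -/
def gcdVec (ν : Fin m → ℕ) (μ : Fin n → ℕ) : ℕ :=
  Nat.gcd (Finset.univ.gcd ν) (Finset.univ.gcd μ)

/-- `d_⋆ = max {1, m + n − (∑ᵢ νᵢ) / gcd(ν,μ)}`. -/
def dStar (ν : Fin m → ℕ) (μ : Fin n → ℕ) : ℕ :=
  max 1 (m + n - (∑ i, ν i) / gcdVec ν μ)

/-- The CRP-gap `δ_F(ν,μ)` of the edge set `F` (computed with respect to the redundant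
edges of `T_F(ν,μ)`). -/
def crpGap (ν : Fin m → ℝ) (μ : Fin n → ℝ) (F : Finset (Fin m × Fin n)) : ℝ :=
  sInf {t : ℝ | ∃ C : Finset (Fin m),
    (∑ i ∈ C, ν i) < (∑ j ∈ nbr (F \ redundantEdges ν μ F) C, μ j) ∧
    t = (∑ j ∈ nbr F C, μ j) - ∑ i ∈ C, ν i}

/-- The CRP-graph relation `R` on the connected components of `G(E ∖ E_r)`:
`R c₁ c₂` holds iff `c₁ ≠ c₂` and some edge `(i,j) ∈ E` has `i` in the demand side of `c₁`
and `j` in the supply side of `c₂`. -/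
def crpRel (ν : Fin m → ℝ) (μ : Fin n → ℝ) (E : Finset (Fin m × Fin n)) :
    (bipartiteGraph (E \ redundantEdges ν μ E)).ConnectedComponent →
    (bipartiteGraph (E \ redundantEdges ν μ E)).ConnectedComponent → Prop :=
  fun c₁ c₂ => c₁ ≠ c₂ ∧ ∃ i j, (i, j) ∈ E ∧
    (bipartiteGraph (E \ redundantEdges ν μ E)).connectedComponentMk (Sum.inl i) = c₁ ∧
    (bipartiteGraph (E \ redundantEdges ν μ E)).connectedComponentMk (Sum.inr j) = c₂

end

/-
Divide out `g = gcd(ν, μ)` and work with integer flows. Inside each block the northwest-corner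
rule gives a flow whose support is a forest respecting the blocks, so it has
`#edges + #components = m + n` and at least `d` components. Two components carrying edges of
values `f < F` are merged by shifting `f` units around the 4-cycle through these edges: one edge
vanishes and two appear, so the support stays a forest with one component fewer. Merging only
stops when all positive entries are equal; as the entries are coprime they are then all `1`, the
support has `∑ ν / g` edges and `m + n - ∑ ν / g` components, which is at most `d` exactly when
`d ≥ d⋆`. If `d < d⋆`, a forest with `d` components would have more edges than the mass `∑ ν / g`
allows, so the initial forest has more components. After doubling the flow, shifting one unit
around a 4-cycle joining two components keeps both old edges and closes a single cycle; merging
then continues down to `d` components and `m + n - d + 1` edges (getting stuck would now leave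
`2 ∑ ν / g ≥ m + n` edges, hence a single component). Scaled back by `g` (resp. `g / 2`), the
flow is a positive point of `T_E(ν, μ)` for its support `E`, so no edge of `E` is redundant and
the ERP number is the number of components.
-/

namespace SimpleGraph

variable {V : Type*} {G : SimpleGraph V} {u v : V}

theorem Reachable.of_sup_edge {a b : V} (h : (G ⊔ edge u v).Reachable a b) :
    G.Reachable a b ∨ ((G.Reachable a u ∨ G.Reachable a v) ∧
      (G.Reachable b u ∨ G.Reachable b v)) := by
  rw [reachable_iff_reflTransGen] at h
  induction h with
  | refl => exact Or.inl .rfl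
  | @tail b c _ hbc ih =>
    rcases hbc with hbc | hbc
    · have hcb := hbc.reachable.symm
      exact ih.imp (·.trans hcb.symm) (And.imp_right (Or.imp hcb.trans hcb.trans))
    · rw [edge_adj] at hbc
      obtain ⟨⟨rfl, rfl⟩ | ⟨rfl, rfl⟩, -⟩ := hbc
      · refine Or.inr ⟨?_, Or.inr .rfl⟩
        rcases ih with h | ⟨h, -⟩
        exacts [Or.inl h, h]
      · refine Or.inr ⟨?_, Or.inl .rfl⟩
        rcases ih with h | ⟨h, -⟩
        exacts [Or.inr h, h]

theorem card_connectedComponent_sup_edge_of_reachable (h : G.Reachable u v) :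
    Nat.card (G ⊔ edge u v).ConnectedComponent = Nat.card G.ConnectedComponent := by
  refine (Nat.card_eq_of_bijective _
    ⟨?_, ConnectedComponent.surjective_map_ofLE le_sup_left⟩).symm
  intro c c'
  induction c using ConnectedComponent.ind with | h a => ?_
  induction c' using ConnectedComponent.ind with | h b => ?_
  simp only [ConnectedComponent.map_mk, ConnectedComponent.eq]
  intro hab
  rcases hab.of_sup_edge with hab | ⟨ha, hb⟩
  · exact hab
  · exact (ha.elim id (·.trans h.symm)).trans (hb.elim id (·.trans h.symm)).symm

/-- Away from the component of `v`, the components of `G` and of `G ⊔ edge u v` correspond. -/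
theorem card_connectedComponent_sup_edge_add_one [Finite V] (h : ¬ G.Reachable u v) :
    Nat.card (G ⊔ edge u v).ConnectedComponent + 1 = Nat.card G.ConnectedComponent := by
  set φ := ConnectedComponent.map (Hom.ofLE (le_sup_left : G ≤ G ⊔ edge u v))
  have hφ : Function.Bijective
      fun c : {c : G.ConnectedComponent // c ≠ G.connectedComponentMk v} => φ c := by
    constructor
    · rintro ⟨c, hc⟩ ⟨c', hc'⟩ hcc'
      induction c using ConnectedComponent.ind with | h a => ?_
      induction c' using ConnectedComponent.ind with | h b => ?_
      simp only [φ, ConnectedComponent.map_mk, ConnectedComponent.eq, ne_eq,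
        Subtype.mk.injEq] at hcc' hc hc' ⊢
      rcases hcc'.of_sup_edge with hab | ⟨ha | ha, hb | hb⟩
      exacts [hab, ha.trans hb.symm, absurd hb hc', absurd ha hc, absurd ha hc]
    · intro c
      induction c using ConnectedComponent.ind with | h a => ?_
      by_cases ha : G.Reachable a v
      · refine ⟨⟨G.connectedComponentMk u, by simpa using h⟩, ?_⟩
        have huv : (G ⊔ edge u v).Adj u v :=
          Or.inr ((edge_adj ..).2 ⟨Or.inl ⟨rfl, rfl⟩, fun huv => h (huv ▸ .rfl)⟩)
        simpa [φ] using huv.reachable.trans (ha.symm.mono le_sup_left)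
      · exact ⟨⟨G.connectedComponentMk a, by simpa using ha⟩, rfl⟩
  have := Fintype.ofFinite G.ConnectedComponent
  have : 0 < Fintype.card G.ConnectedComponent := Fintype.card_pos_iff.2 ⟨G.connectedComponentMk v⟩
  rw [← Nat.card_eq_of_bijective _ hφ, Nat.card_eq_fintype_card, Nat.card_eq_fintype_card,
    Fintype.card_subtype_compl]
  simp only [Fintype.card_unique]
  omega

theorem card_le_card_connectedComponent [Finite V] {κ : Type*} {f : V → κ}
    (hf : Function.Surjective f) (hadj : ∀ a b, G.Adj a b → f a = f b) :
    Nat.card κ ≤ Nat.card G.ConnectedComponent := by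
  have hwalk {a b : V} (p : G.Walk a b) : f a = f b := by
    induction p with
    | nil => rfl
    | cons h _ ih => exact (hadj _ _ h).trans ih
  refine Nat.card_le_card_of_surjective (ConnectedComponent.lift f fun _ _ p _ => hwalk p) ?_
  intro k
  obtain ⟨a, rfl⟩ := hf k
  exact ⟨G.connectedComponentMk a, rfl⟩

theorem card_connectedComponent_bot :
    Nat.card (⊥ : SimpleGraph V).ConnectedComponent = Nat.card V := by
  refine (Nat.card_eq_of_bijective (⊥ : SimpleGraph V).connectedComponentMk ⟨?_, ?_⟩).symm
  · intro a b h
    simpa using h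
  · intro c
    induction c using ConnectedComponent.ind with | h a => exact ⟨a, rfl⟩

end SimpleGraph

section BipartiteGraph

open Finset SimpleGraph

variable {m n : ℕ} {F : Finset (Fin m × Fin n)} {i i₀ i₁ : Fin m} {j j₀ j₁ : Fin n}

theorem bipartiteGraph_adj_inl_inr : (bipartiteGraph F).Adj (.inl i) (.inr j) ↔ (i, j) ∈ F := by
  simp [bipartiteGraph]

theorem reachable_inl_inr_of_mem (h : (i, j) ∈ F) :
    (bipartiteGraph F).Reachable (.inl i) (.inr j) :=
  (bipartiteGraph_adj_inl_inr.2 h).reachable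

theorem bipartiteGraph_insert :
    bipartiteGraph (insert (i, j) F) = bipartiteGraph F ⊔ edge (.inl i) (.inr j) := by
  ext u v
  simp only [bipartiteGraph, sup_adj, fromRel_adj, edge_adj, mem_insert, Prod.mk.injEq]
  aesop

theorem numComponents_insert_add_one (h : ¬ (bipartiteGraph F).Reachable (.inl i) (.inr j)) :
    numComponents (insert (i, j) F) + 1 = numComponents F := by
  rw [numComponents, numComponents, bipartiteGraph_insert]
  exact card_connectedComponent_sup_edge_add_one h

theorem numComponents_insert_of_reachable (h : (bipartiteGraph F).Reachable (.inl i) (.inr j)) :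
    numComponents (insert (i, j) F) = numComponents F := by
  rw [numComponents, numComponents, bipartiteGraph_insert]
  exact card_connectedComponent_sup_edge_of_reachable h

theorem card_add_numComponents_insert
    (h : ¬ (bipartiteGraph F).Reachable (.inl i) (.inr j)) :
    #(insert (i, j) F) + numComponents (insert (i, j) F) = #F + numComponents F := by
  have := numComponents_insert_add_one h
  rw [card_insert_of_notMem fun hij => h (reachable_inl_inr_of_mem hij)]
  omega

theorem numComponents_empty : numComponents (∅ : Finset (Fin m × Fin n)) = m + n := by
  have : bipartiteGraph (∅ : Finset (Fin m × Fin n)) = ⊥ := by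
    ext u v
    simp [bipartiteGraph]
  rw [numComponents, this, card_connectedComponent_bot]
  simp

theorem not_reachable_inl_inr_of_row (h : ∀ j', (i, j') ∉ F) :
    ¬ (bipartiteGraph F).Reachable (.inl i) (.inr j) := by
  refine not_reachable_of_neighborSet_left_eq_empty Sum.inl_ne_inr ?_
  ext v
  simp [bipartiteGraph, h]

theorem not_reachable_inl_inr_of_col (h : ∀ i', (i', j) ∉ F) :
    ¬ (bipartiteGraph F).Reachable (.inl i) (.inr j) := by
  refine not_reachable_of_neighborSet_right_eq_empty Sum.inl_ne_inr ?_
  ext v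
  simp [bipartiteGraph, h]

theorem le_numComponents_of_surjective {κ : Type*} {lab : Fin m ⊕ Fin n → κ}
    (hlab : Function.Surjective lab) (hF : ∀ e ∈ F, lab (.inl e.1) = lab (.inr e.2)) :
    Nat.card κ ≤ numComponents F := by
  refine card_le_card_connectedComponent hlab fun u v huv => ?_
  simp only [bipartiteGraph, fromRel_adj] at huv
  obtain ⟨-, ⟨i, j, rfl, rfl, h⟩ | ⟨i, j, rfl, rfl, h⟩⟩ := huv
  exacts [hF _ h, (hF _ h).symm]

theorem notMem_of_not_reachable (hsep : ¬ (bipartiteGraph F).Reachable (.inl i₀) (.inl i₁))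
    (h₁ : (i₁, j₁) ∈ F) : (i₀, j₁) ∉ F := fun h =>
  hsep ((reachable_inl_inr_of_mem h).trans (reachable_inl_inr_of_mem h₁).symm)

theorem numComponents_insert_cross (hsep : ¬ (bipartiteGraph F).Reachable (.inl i₀) (.inl i₁))
    (h₀ : (i₀, j₀) ∈ F) (h₁ : (i₁, j₁) ∈ F) :
    numComponents (insert (i₁, j₀) (insert (i₀, j₁) F)) + 1 = numComponents F := by
  have h₀₁ : ¬ (bipartiteGraph F).Reachable (.inl i₀) (.inr j₁) := fun h =>
    hsep (h.trans (reachable_inl_inr_of_mem h₁).symm)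
  have h₁₀ : (bipartiteGraph (insert (i₀, j₁) F)).Reachable (.inl i₁) (.inr j₀) :=
    (reachable_inl_inr_of_mem (mem_insert_of_mem h₁)).trans <|
      (reachable_inl_inr_of_mem (mem_insert_self _ _)).symm.trans
        (reachable_inl_inr_of_mem (mem_insert_of_mem h₀))
  rw [numComponents_insert_of_reachable h₁₀, numComponents_insert_add_one h₀₁]

theorem card_insert_cross (hsep : ¬ (bipartiteGraph F).Reachable (.inl i₀) (.inl i₁))
    (h₀ : (i₀, j₀) ∈ F) (h₁ : (i₁, j₁) ∈ F) :
    #(insert (i₁, j₀) (insert (i₀, j₁) F)) = #F + 2 := by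
  have hi : i₁ ≠ i₀ := fun h => hsep (h ▸ .rfl)
  rw [card_insert_of_notMem, card_insert_of_notMem (notMem_of_not_reachable hsep h₁)]
  simpa [hi] using notMem_of_not_reachable (fun h => hsep h.symm) h₀

theorem numComponents_erase_of_mem_cycle (hi : i₀ ≠ i₁) (hj : j₀ ≠ j₁) (h₀₀ : (i₀, j₀) ∈ F)
    (h₀₁ : (i₀, j₁) ∈ F) (h₁₁ : (i₁, j₁) ∈ F) (h₁₀ : (i₁, j₀) ∈ F) :
    numComponents (F.erase (i₀, j₀)) = numComponents F := by
  have hmem {i j} (h : (i, j) ∈ F) (hne : (i, j) ≠ (i₀, j₀)) :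
      (bipartiteGraph (F.erase (i₀, j₀))).Reachable (.inl i) (.inr j) :=
    reachable_inl_inr_of_mem (mem_erase.2 ⟨hne, h⟩)
  have hreach : (bipartiteGraph (F.erase (i₀, j₀))).Reachable (.inl i₀) (.inr j₀) :=
    (hmem h₀₁ (by simp [hj.symm])).trans <| (hmem h₁₁ (by simp [hi.symm])).symm.trans
      (hmem h₁₀ (by simp [hi.symm]))
  conv_rhs => rw [← insert_erase h₀₀]
  exact (numComponents_insert_of_reachable hreach).symm

end BipartiteGraph

section Flow

open Finset SimpleGraph

variable {m n : ℕ}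

def edgeSupport (x : Fin m → Fin n → ℤ) : Finset (Fin m × Fin n) :=
  {e | x e.1 e.2 ≠ 0}

@[simp]
theorem mem_edgeSupport {x : Fin m → Fin n → ℤ} {e : Fin m × Fin n} :
    e ∈ edgeSupport x ↔ x e.1 e.2 ≠ 0 := by
  simp [edgeSupport]

@[simp]
theorem edgeSupport_zero : edgeSupport (0 : Fin m → Fin n → ℤ) = ∅ := by
  ext
  simp

structure IsFlow (a : Fin m → ℤ) (b : Fin n → ℤ) (x : Fin m → Fin n → ℤ) : Prop where
  nonneg : ∀ i j, 0 ≤ x i j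
  sum_row : ∀ i, ∑ j, x i j = a i
  sum_col : ∀ j, ∑ i, x i j = b j

def EntriesCoprime (x : Fin m → Fin n → ℤ) : Prop :=
  ∀ w : ℤ, (∀ i j, w ∣ x i j) → IsUnit w

variable {a : Fin m → ℤ} {b : Fin n → ℤ} {x : Fin m → Fin n → ℤ}

namespace IsFlow

theorem sum_eq_sum (hx : IsFlow a b x) : ∑ i, a i = ∑ j, b j := by
  simp only [← hx.sum_row, ← hx.sum_col]
  exact sum_comm

theorem sum_eq_sum_edgeSupport (hx : IsFlow a b x) :
    ∑ i, a i = ∑ e ∈ edgeSupport x, x e.1 e.2 := by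
  rw [edgeSupport, sum_filter_ne_zero, Fintype.sum_prod_type]
  simp [hx.sum_row]

theorem card_edgeSupport_le (hx : IsFlow a b x) : (#(edgeSupport x) : ℤ) ≤ ∑ i, a i := by
  rw [hx.sum_eq_sum_edgeSupport, card_eq_sum_ones, Nat.cast_sum, Nat.cast_one]
  refine sum_le_sum fun e he => ?_
  have := hx.nonneg e.1 e.2
  have := mem_edgeSupport.1 he
  omega

theorem card_edgeSupport_eq (hx : IsFlow a b x) (h1 : ∀ i j, x i j ≠ 0 → x i j = 1) :
    (#(edgeSupport x) : ℤ) = ∑ i, a i := by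
  rw [hx.sum_eq_sum_edgeSupport, card_eq_sum_ones, Nat.cast_sum, Nat.cast_one]
  exact sum_congr rfl fun e he => (h1 _ _ (mem_edgeSupport.1 he)).symm

theorem eq_zero_of_row {i : Fin m} (hx : IsFlow a b x) (ha : a i = 0) (j : Fin n) :
    x i j = 0 :=
  (sum_eq_zero_iff_of_nonneg fun j _ => hx.nonneg i j).1 ((hx.sum_row i).trans ha) j (mem_univ j)

theorem eq_zero_of_col {j : Fin n} (hx : IsFlow a b x) (hb : b j = 0) (i : Fin m) :
    x i j = 0 :=
  (sum_eq_zero_iff_of_nonneg fun i _ => hx.nonneg i j).1 ((hx.sum_col j).trans hb) i (mem_univ i)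

theorem entriesCoprime (hx : IsFlow a b x)
    (hab : ∀ w : ℤ, (∀ i, w ∣ a i) → (∀ j, w ∣ b j) → IsUnit w) : EntriesCoprime x :=
  fun w hw => hab w (fun i => hx.sum_row i ▸ dvd_sum fun j _ => hw i j)
    (fun j => hx.sum_col j ▸ dvd_sum fun i _ => hw i j)

theorem exists_reachable_inl (hx : IsFlow a b x) (ha : ∀ i, 0 < a i) (hb : ∀ j, 0 < b j)
    (u : Fin m ⊕ Fin n) :
    ∃ i j, x i j ≠ 0 ∧ (bipartiteGraph (edgeSupport x)).Reachable u (.inl i) := by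
  cases u with
  | inl i =>
    obtain ⟨j, -, hj⟩ := exists_ne_zero_of_sum_ne_zero ((hx.sum_row i).trans_ne (ha i).ne')
    exact ⟨i, j, hj, .rfl⟩
  | inr j =>
    obtain ⟨i, -, hi⟩ := exists_ne_zero_of_sum_ne_zero ((hx.sum_col j).trans_ne (hb j).ne')
    exact ⟨i, j, hi, (reachable_inl_inr_of_mem (mem_edgeSupport.2 hi)).symm⟩

theorem exists_not_reachable (hx : IsFlow a b x) (ha : ∀ i, 0 < a i) (hb : ∀ j, 0 < b j)
    (h2 : 2 ≤ numComponents (edgeSupport x)) :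
    ∃ i₀ j₀ i₁ j₁, x i₀ j₀ ≠ 0 ∧ x i₁ j₁ ≠ 0 ∧
      ¬ (bipartiteGraph (edgeSupport x)).Reachable (.inl i₀) (.inl i₁) := by
  have : Nontrivial (bipartiteGraph (edgeSupport x)).ConnectedComponent :=
    Finite.one_lt_card_iff_nontrivial.1 h2
  obtain ⟨c, c', hcc'⟩ := exists_pair_ne (bipartiteGraph (edgeSupport x)).ConnectedComponent
  induction c using ConnectedComponent.ind with | h u => ?_
  induction c' using ConnectedComponent.ind with | h v => ?_
  obtain ⟨i₀, j₀, h₀, hu⟩ := hx.exists_reachable_inl ha hb u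
  obtain ⟨i₁, j₁, h₁, hv⟩ := hx.exists_reachable_inl ha hb v
  exact ⟨i₀, j₀, i₁, j₁, h₀, h₁, fun h => hcc' (ConnectedComponent.sound
    (hu.trans (h.trans hv.symm)))⟩

end IsFlow

end Flow

section Forest

open Finset SimpleGraph

variable {m n : ℕ} {a : Fin m → ℤ} {b : Fin n → ℤ} {x : Fin m → Fin n → ℤ}

def addEntry (x : Fin m → Fin n → ℤ) (i₀ : Fin m) (j₀ : Fin n) (t : ℤ) : Fin m → Fin n → ℤ :=
  fun i j => x i j + if i = i₀ ∧ j = j₀ then t else 0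

theorem IsFlow.addEntry (hx : IsFlow a b x) {i₀ : Fin m} {j₀ : Fin n} {t : ℤ} (ht : 0 ≤ t) :
    IsFlow (a + Pi.single i₀ t) (b + Pi.single j₀ t) (addEntry x i₀ j₀ t) where
  nonneg i j := by
    have := hx.nonneg i j
    simp only [_root_.addEntry]
    split_ifs <;> omega
  sum_row i := by simp [_root_.addEntry, sum_add_distrib, Pi.single_apply, ite_and, hx.sum_row]
  sum_col j := by simp [_root_.addEntry, sum_add_distrib, Pi.single_apply, ite_and, hx.sum_col]

theorem edgeSupport_addEntry (hx : ∀ i j, 0 ≤ x i j) {i₀ : Fin m} {j₀ : Fin n} {t : ℤ}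
    (ht : 0 < t) : edgeSupport (addEntry x i₀ j₀ t) = insert (i₀, j₀) (edgeSupport x) := by
  ext ⟨i, j⟩
  have := hx i j
  simp only [mem_edgeSupport, mem_insert, Prod.mk.injEq, addEntry]
  split_ifs with h
  · obtain ⟨rfl, rfl⟩ := h
    simp
    omega
  · simp [h]

theorem exists_pos_of_balanced {κ : Type*} {p : Fin m → κ} {q : Fin n → κ}
    (ha : ∀ i, 0 ≤ a i) (hb : ∀ j, 0 ≤ b j)
    (hbal : ∀ l, ∑ i with p i = l, a i = ∑ j with q j = l, b j) {i₀ : Fin m} (hi₀ : 0 < a i₀) :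
    ∃ j₀, q j₀ = p i₀ ∧ 0 < b j₀ := by
  have hle : a i₀ ≤ ∑ i with p i = p i₀, a i := single_le_sum (fun i _ => ha i) (by simp)
  rw [hbal] at hle
  obtain ⟨j₀, hj₀, hne⟩ := exists_ne_zero_of_sum_ne_zero
    (by omega : ∑ j with q j = p i₀, b j ≠ 0)
  exact ⟨j₀, (mem_filter.1 hj₀).2, lt_of_le_of_ne (hb j₀) (Ne.symm hne)⟩

theorem eq_zero_of_balanced {κ : Type*} {p : Fin m → κ} {q : Fin n → κ}
    (ha : ∀ i, 0 ≤ a i) (hb : ∀ j, 0 ≤ b j)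
    (hbal : ∀ l, ∑ i with p i = l, a i = ∑ j with q j = l, b j) (ha0 : ∀ i, a i = 0) (j : Fin n) :
    b j = 0 := by
  by_contra hj
  obtain ⟨i, -, hi⟩ := exists_pos_of_balanced hb ha (fun l => (hbal l).symm)
    (lt_of_le_of_ne (hb j) (Ne.symm hj))
  exact hi.ne' (ha0 i)

theorem sub_single_nonneg {ι : Type*} [DecidableEq ι] {f : ι → ℤ} (hf : ∀ i, 0 ≤ f i) {k : ι}
    {t : ℤ} (ht : t ≤ f k) (i : ι) : 0 ≤ (f - Pi.single k t : ι → ℤ) i := by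
  by_cases h : i = k <;> simp [h, hf i, ht]

/-- Northwest-corner rule inside the blocks `p⁻¹ l × q⁻¹ l`: each step saturates the smaller
margin of a row and a column of the same block, which then leaves the problem, so the new edge
hangs off a vertex that is isolated in the flow built for the rest. -/
theorem exists_isFlow_forest {κ : Type*} {p : Fin m → κ} {q : Fin n → κ}
    (ha : ∀ i, 0 ≤ a i) (hb : ∀ j, 0 ≤ b j)
    (hbal : ∀ l, ∑ i with p i = l, a i = ∑ j with q j = l, b j) :
    ∃ x, IsFlow a b x ∧ (∀ i j, x i j ≠ 0 → p i = q j) ∧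
      #(edgeSupport x) + numComponents (edgeSupport x) = m + n := by
  induction hN : (∑ i, a i).toNat using Nat.strong_induction_on generalizing a b with
  | _ N ih =>
  by_cases hzero : ∀ i, a i = 0
  · refine ⟨0, ⟨fun _ _ => le_rfl, fun i => by simp [hzero],
      fun j => by simp [eq_zero_of_balanced ha hb hbal hzero]⟩, by simp, ?_⟩
    rw [edgeSupport_zero, numComponents_empty, card_empty, zero_add]
  obtain ⟨i₀, hi₀⟩ := not_forall.1 hzero
  have hai₀ : 0 < a i₀ := lt_of_le_of_ne (ha i₀) (Ne.symm hi₀)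
  obtain ⟨j₀, hj₀, hbj₀⟩ := exists_pos_of_balanced ha hb hbal hai₀
  set t := min (a i₀) (b j₀)
  have ht : 0 < t := lt_min hai₀ hbj₀
  have hmass : (∑ i, (a - Pi.single i₀ t : Fin m → ℤ) i).toNat < N := by
    have := single_le_sum (fun i _ => ha i) (mem_univ i₀)
    simp only [Pi.sub_apply, sum_sub_distrib, sum_pi_single', mem_univ, if_true]
    omega
  obtain ⟨x, hx, hblock, hforest⟩ := ih _ hmass (a := a - Pi.single i₀ t)
    (b := b - Pi.single j₀ t) (sub_single_nonneg ha (min_le_left _ _))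
    (sub_single_nonneg hb (min_le_right _ _)) (fun l => by simp [sum_sub_distrib, hbal, hj₀]) rfl
  have hsep : ¬ (bipartiteGraph (edgeSupport x)).Reachable (.inl i₀) (.inr j₀) := by
    rcases min_choice (a i₀) (b j₀) with h | h
    · exact not_reachable_inl_inr_of_row fun j => by
        simp [hx.eq_zero_of_row (i := i₀) (by simp [t, h])]
    · exact not_reachable_inl_inr_of_col fun i => by
        simp [hx.eq_zero_of_col (j := j₀) (by simp [t, h])]
  refine ⟨addEntry x i₀ j₀ t, by simpa using hx.addEntry (i₀ := i₀) (j₀ := j₀) ht.le,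
    fun i j hij => ?_, ?_⟩
  · by_cases h : i = i₀ ∧ j = j₀
    · rw [h.1, h.2, hj₀]
    · exact hblock i j (by simpa [addEntry, h] using hij)
  · rw [edgeSupport_addEntry hx.nonneg ht, card_add_numComponents_insert hsep, hforest]

theorem exists_index_of_partition {α ι : Type*} [Fintype α] [Fintype ι] [DecidableEq α]
    {P : ι → Finset α} (hdisj : ∀ l₁ l₂, l₁ ≠ l₂ → Disjoint (P l₁) (P l₂))
    (hcov : univ.biUnion P = univ) : ∃ p : α → ι, ∀ x l, p x = l ↔ x ∈ P l := by
  have hex : ∀ x, ∃ l, x ∈ P l := fun x => by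
    simpa using (hcov ▸ mem_univ x : x ∈ univ.biUnion P)
  choose p hp using hex
  refine ⟨p, fun x l => ⟨fun h => h ▸ hp x, fun hx => ?_⟩⟩
  by_contra hne
  exact disjoint_left.1 (hdisj _ _ hne) (hp x) hx

theorem exists_isFlow_forest_of_partition {d : ℕ} (P : Fin d → Finset (Fin m))
    (Q : Fin d → Finset (Fin n)) (hPne : ∀ l, (P l).Nonempty)
    (hPdisj : ∀ l₁ l₂, l₁ ≠ l₂ → Disjoint (P l₁) (P l₂))
    (hQdisj : ∀ l₁ l₂, l₁ ≠ l₂ → Disjoint (Q l₁) (Q l₂))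
    (hPcov : univ.biUnion P = univ) (hQcov : univ.biUnion Q = univ)
    (ha : ∀ i, 0 ≤ a i) (hb : ∀ j, 0 ≤ b j) (hsum : ∀ l, ∑ i ∈ P l, a i = ∑ j ∈ Q l, b j) :
    ∃ x, IsFlow a b x ∧ #(edgeSupport x) + numComponents (edgeSupport x) = m + n ∧
      d ≤ numComponents (edgeSupport x) := by
  obtain ⟨p, hp⟩ := exists_index_of_partition hPdisj hPcov
  obtain ⟨q, hq⟩ := exists_index_of_partition hQdisj hQcov
  obtain ⟨x, hx, hblock, hforest⟩ := exists_isFlow_forest (p := p) (q := q) ha hb fun l => by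
    convert hsum l using 2 <;> ext <;> simp [hp, hq]
  refine ⟨x, hx, hforest, ?_⟩
  have hsurj : Function.Surjective (Sum.elim p q) := fun l =>
    ⟨.inl (hPne l).choose, (hp _ l).2 (hPne l).choose_spec⟩
  simpa using le_numComponents_of_surjective hsurj fun e he => hblock _ _ (mem_edgeSupport.1 he)

end Forest

section CycleShift

open Finset SimpleGraph

variable {m n : ℕ} {a : Fin m → ℤ} {b : Fin n → ℤ} {x : Fin m → Fin n → ℤ}
  {i₀ i₁ : Fin m} {j₀ j₁ : Fin n} {τ : ℤ}

/-- Shifts `τ` units around the 4-cycle `i₀ - j₁ - i₁ - j₀`. The correction is the outer product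
of `e i₀ - e i₁` and `e j₁ - e j₀`, so all row and column sums are unchanged. -/
def cycleShift (x : Fin m → Fin n → ℤ) (i₀ i₁ : Fin m) (j₀ j₁ : Fin n) (τ : ℤ) :
    Fin m → Fin n → ℤ :=
  fun i j => x i j + τ * ((Pi.single i₀ 1 - Pi.single i₁ 1 : Fin m → ℤ) i *
    (Pi.single j₁ 1 - Pi.single j₀ 1 : Fin n → ℤ) j)

theorem IsFlow.cycleShift (hx : IsFlow a b x) (hτ : 0 ≤ τ) (h₀ : τ ≤ x i₀ j₀)
    (h₁ : τ ≤ x i₁ j₁) : IsFlow a b (cycleShift x i₀ i₁ j₀ j₁ τ) where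
  nonneg i j := by
    have := hx.nonneg i j
    simp only [_root_.cycleShift, Pi.sub_apply, Pi.single_apply]
    split_ifs <;> simp_all <;> omega
  sum_row i := by
    simp [_root_.cycleShift, sum_add_distrib, ← mul_sum, sum_sub_distrib, hx.sum_row]
  sum_col j := by
    simp only [_root_.cycleShift, sum_add_distrib, ← mul_sum, ← sum_mul, hx.sum_col]
    simp [sum_sub_distrib]

theorem edgeSupport_cycleShift_of_lt (hx : ∀ i j, 0 ≤ x i j) (hi : i₀ ≠ i₁) (hj : j₀ ≠ j₁)
    (hτ : 0 < τ) (h₀ : τ < x i₀ j₀) (h₁ : τ < x i₁ j₁) :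
    edgeSupport (cycleShift x i₀ i₁ j₀ j₁ τ) =
      insert (i₁, j₀) (insert (i₀, j₁) (edgeSupport x)) := by
  ext ⟨i, j⟩
  have := hx i j
  clear hx
  simp only [mem_edgeSupport, mem_insert, Prod.mk.injEq, cycleShift, Pi.sub_apply,
    Pi.single_apply]
  split_ifs <;> simp_all <;> omega

theorem edgeSupport_cycleShift_self (hx : ∀ i j, 0 ≤ x i j) (hi : i₀ ≠ i₁) (hj : j₀ ≠ j₁)
    (h₀ : 0 < x i₀ j₀) (h₁ : x i₀ j₀ < x i₁ j₁) :
    edgeSupport (cycleShift x i₀ i₁ j₀ j₁ (x i₀ j₀)) =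
      (insert (i₁, j₀) (insert (i₀, j₁) (edgeSupport x))).erase (i₀, j₀) := by
  ext ⟨i, j⟩
  have := hx i j
  clear hx
  simp only [mem_edgeSupport, mem_erase, mem_insert, Prod.mk.injEq, cycleShift,
    Pi.sub_apply, Pi.single_apply]
  split_ifs <;> simp_all <;> omega

theorem EntriesCoprime.cycleShift (hx : EntriesCoprime x) (hi : i₀ ≠ i₁) (hj : j₀ ≠ j₁)
    (h₀₁ : x i₀ j₁ = 0) : EntriesCoprime (cycleShift x i₀ i₁ j₀ j₁ τ) := by
  intro w hw
  have hτ : w ∣ τ := by simpa [_root_.cycleShift, h₀₁, hi, hj.symm] using hw i₀ j₁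
  refine hx w fun i j => ?_
  have := (hw i j).sub (dvd_mul_of_dvd_left hτ ((Pi.single i₀ 1 - Pi.single i₁ 1 : Fin m → ℤ) i *
    (Pi.single j₁ 1 - Pi.single j₀ 1 : Fin n → ℤ) j))
  simpa [_root_.cycleShift] using this

namespace IsFlow

theorem exists_merge (hx : IsFlow a b x) (hcop : EntriesCoprime x)
    (hsep : ¬ (bipartiteGraph (edgeSupport x)).Reachable (.inl i₀) (.inl i₁))
    (h₀ : x i₀ j₀ ≠ 0) (hlt : x i₀ j₀ < x i₁ j₁) :
    ∃ y, IsFlow a b y ∧ EntriesCoprime y ∧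
      numComponents (edgeSupport y) + 1 = numComponents (edgeSupport x) ∧
      #(edgeSupport y) = #(edgeSupport x) + 1 := by
  have hpos : 0 < x i₀ j₀ := lt_of_le_of_ne (hx.nonneg _ _) (Ne.symm h₀)
  have hmem₀ : (i₀, j₀) ∈ edgeSupport x := mem_edgeSupport.2 h₀
  have hmem₁ : (i₁, j₁) ∈ edgeSupport x := mem_edgeSupport.2 (hpos.trans hlt).ne'
  have hi : i₀ ≠ i₁ := fun h => hsep (h ▸ .rfl)
  have h₀₁ := notMem_of_not_reachable hsep hmem₁
  have hj : j₀ ≠ j₁ := fun h => h₀₁ (h ▸ hmem₀)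
  refine ⟨_, hx.cycleShift hpos.le le_rfl hlt.le, hcop.cycleShift hi hj (by simpa using h₀₁), ?_⟩
  rw [edgeSupport_cycleShift_self hx.nonneg hi hj hpos hlt,
    numComponents_erase_of_mem_cycle hi hj (by simp [hmem₀]) (by simp) (by simp [hmem₁])
      (by simp),
    card_erase_of_mem (by simp [hmem₀]), card_insert_cross hsep hmem₀ hmem₁]
  exact ⟨numComponents_insert_cross hsep hmem₀ hmem₁, rfl⟩

/-- Doubling the flow makes room to shift one unit without emptying an edge, which closes a
cycle through two components. -/
theorem exists_split (hx : IsFlow a b x)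
    (hsep : ¬ (bipartiteGraph (edgeSupport x)).Reachable (.inl i₀) (.inl i₁))
    (h₀ : x i₀ j₀ ≠ 0) (h₁ : x i₁ j₁ ≠ 0) :
    ∃ y, IsFlow (fun i => 2 * a i) (fun j => 2 * b j) y ∧ EntriesCoprime y ∧
      numComponents (edgeSupport y) + 1 = numComponents (edgeSupport x) ∧
      #(edgeSupport y) = #(edgeSupport x) + 2 := by
  have hmem₀ : (i₀, j₀) ∈ edgeSupport x := mem_edgeSupport.2 h₀
  have hmem₁ : (i₁, j₁) ∈ edgeSupport x := mem_edgeSupport.2 h₁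
  have hi : i₀ ≠ i₁ := fun h => hsep (h ▸ .rfl)
  have h₀₁ : x i₀ j₁ = 0 := by simpa using notMem_of_not_reachable hsep hmem₁
  have hj : j₀ ≠ j₁ := fun h => h₀ (h ▸ h₀₁)
  have hx2 : IsFlow (fun i => 2 * a i) (fun j => 2 * b j) fun i j => 2 * x i j :=
    { nonneg := fun i j => by have := hx.nonneg i j; omega
      sum_row := fun i => by rw [← mul_sum, hx.sum_row]
      sum_col := fun j => by rw [← mul_sum, hx.sum_col] }
  have hsupp : edgeSupport (fun i j => 2 * x i j) = edgeSupport x := by ext; simp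
  have hlt₀ : 1 < 2 * x i₀ j₀ := by have := hx.nonneg i₀ j₀; omega
  have hlt₁ : 1 < 2 * x i₁ j₁ := by have := hx.nonneg i₁ j₁; omega
  refine ⟨_root_.cycleShift (fun i j => 2 * x i j) i₀ i₁ j₀ j₁ 1,
    hx2.cycleShift zero_le_one hlt₀.le hlt₁.le, fun w hw => ?_, ?_⟩
  · have := hw i₀ j₁
    simp only [_root_.cycleShift, h₀₁] at this
    exact isUnit_of_dvd_one (by simpa [hi, hj.symm] using this)
  · rw [edgeSupport_cycleShift_of_lt hx2.nonneg hi hj one_pos hlt₀ hlt₁, hsupp]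
    exact ⟨numComponents_insert_cross hsep hmem₀ hmem₁, card_insert_cross hsep hmem₀ hmem₁⟩

end IsFlow

end CycleShift

section Merging

open Finset SimpleGraph

variable {m n : ℕ} {a : Fin m → ℤ} {b : Fin n → ℤ} {x : Fin m → Fin n → ℤ}

namespace IsFlow

theorem eq_one_of_forall_le (hx : IsFlow a b x) (ha : ∀ i, 0 < a i) (hb : ∀ j, 0 < b j)
    (hcop : EntriesCoprime x) (h2 : 2 ≤ numComponents (edgeSupport x))
    (hstuck : ∀ i₀ j₀ i₁ j₁, x i₀ j₀ ≠ 0 →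
      ¬ (bipartiteGraph (edgeSupport x)).Reachable (.inl i₀) (.inl i₁) → x i₁ j₁ ≤ x i₀ j₀)
    {i : Fin m} {j : Fin n} (hij : x i j ≠ 0) : x i j = 1 := by
  have cross : ∀ i₀ j₀ i₁ j₁, x i₀ j₀ ≠ 0 → x i₁ j₁ ≠ 0 →
      ¬ (bipartiteGraph (edgeSupport x)).Reachable (.inl i₀) (.inl i₁) → x i₀ j₀ = x i₁ j₁ :=
    fun i₀ j₀ i₁ j₁ h₀ h₁ hsep =>
      le_antisymm (hstuck i₁ j₁ i₀ j₀ h₁ fun h => hsep h.symm) (hstuck i₀ j₀ i₁ j₁ h₀ hsep)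
  obtain ⟨r, jr, s, js, hr, hs, hrs⟩ := hx.exists_not_reachable ha hb h2
  have hconst : ∀ i j, x i j ≠ 0 → x i j = x r jr := by
    intro i j h
    by_cases hir : (bipartiteGraph (edgeSupport x)).Reachable (.inl i) (.inl r)
    · have his : ¬ (bipartiteGraph (edgeSupport x)).Reachable (.inl i) (.inl s) :=
        fun his => hrs (hir.symm.trans his)
      rw [cross i j s js h hs his, ← cross r jr s js hr hs hrs]
    · exact cross i j r jr h hr hir
  have hunit : IsUnit (x r jr) := hcop _ fun i j => by
    by_cases h : x i j = 0
    · simp [h]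
    · rw [hconst i j h]
  have := hx.nonneg r jr
  rw [hconst i j hij]
  rcases Int.isUnit_iff.1 hunit with h | h <;> omega

/-- Merging never gets stuck above `d` components: a stuck flow has only entries `1`, hence
`∑ a` edges, which `hbound` forbids. -/
theorem exists_numComponents_eq (hx : IsFlow a b x) (ha : ∀ i, 0 < a i) (hb : ∀ j, 0 < b j)
    (hcop : EntriesCoprime x) {d : ℕ} (hd : 0 < d) (hdx : d ≤ numComponents (edgeSupport x))
    (hbound : ((#(edgeSupport x) + numComponents (edgeSupport x) : ℕ) : ℤ) ≤ ∑ i, a i + d) :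
    ∃ y, IsFlow a b y ∧ numComponents (edgeSupport y) = d ∧
      #(edgeSupport y) + numComponents (edgeSupport y) =
        #(edgeSupport x) + numComponents (edgeSupport x) := by
  induction hk : numComponents (edgeSupport x) using Nat.strong_induction_on generalizing x with
  | _ k ih =>
  rcases hdx.eq_or_lt with rfl | hdk
  · exact ⟨x, hx, rfl, by rw [hk]⟩
  by_cases hmerge : ∃ i₀ j₀ i₁ j₁, x i₀ j₀ ≠ 0 ∧
      ¬ (bipartiteGraph (edgeSupport x)).Reachable (.inl i₀) (.inl i₁) ∧ x i₀ j₀ < x i₁ j₁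
  · obtain ⟨i₀, j₀, i₁, j₁, h₀, hsep, hlt⟩ := hmerge
    obtain ⟨y, hy, hcopy, hcomp, hcard⟩ := hx.exists_merge hcop hsep h₀ hlt
    obtain ⟨z, hz, hzd, hzeq⟩ :=
      ih (k - 1) (by omega) hy hcopy (by omega) (by push_cast at hbound ⊢; omega) (by omega)
    exact ⟨z, hz, hzd, by omega⟩
  · simp only [not_exists, not_and, not_lt] at hmerge
    have := hx.card_edgeSupport_eq fun i j => hx.eq_one_of_forall_le ha hb hcop (by omega) hmerge
    push_cast at hbound
    omega

theorem exists_unicyclic (hx : IsFlow a b x) (ha : ∀ i, 0 < a i) (hb : ∀ j, 0 < b j)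
    {d : ℕ} (hd : 0 < d) (hforest : #(edgeSupport x) + numComponents (edgeSupport x) = m + n)
    (hdx : d ≤ numComponents (edgeSupport x)) (hB : ∑ i, a i + d < m + n) :
    ∃ y, IsFlow (fun i => 2 * a i) (fun j => 2 * b j) y ∧ numComponents (edgeSupport y) = d ∧
      #(edgeSupport y) + d = m + n + 1 := by
  have hcard := hx.card_edgeSupport_le
  obtain ⟨i₀, j₀, i₁, j₁, h₀, h₁, hsep⟩ := hx.exists_not_reachable ha hb (by omega)
  obtain ⟨y₁, hy₁, hcop, hcomp, hcard₁⟩ := hx.exists_split hsep h₀ h₁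
  have hm : (m : ℤ) ≤ ∑ i, a i := by
    simpa using card_nsmul_le_sum univ a 1 fun i _ => ha i
  have hn : (n : ℤ) ≤ ∑ i, a i := by
    simpa [hx.sum_eq_sum] using card_nsmul_le_sum univ b 1 fun j _ => hb j
  obtain ⟨y, hy, hyd, hy₁d⟩ := hy₁.exists_numComponents_eq (fun i => by linarith [ha i])
    (fun j => by linarith [hb j]) hcop hd (by omega)
    (by rw [← mul_sum]; push_cast; omega)
  exact ⟨y, hy, hyd, by omega⟩

end IsFlow

theorem exists_isFlow_numComponents_eq_of_partition {d : ℕ} (hd : 0 < d)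
    (ha : ∀ i, 0 < a i) (hb : ∀ j, 0 < b j)
    (hcop : ∀ w : ℤ, (∀ i, w ∣ a i) → (∀ j, w ∣ b j) → IsUnit w)
    (P : Fin d → Finset (Fin m)) (Q : Fin d → Finset (Fin n)) (hPne : ∀ l, (P l).Nonempty)
    (hPdisj : ∀ l₁ l₂, l₁ ≠ l₂ → Disjoint (P l₁) (P l₂))
    (hQdisj : ∀ l₁ l₂, l₁ ≠ l₂ → Disjoint (Q l₁) (Q l₂))
    (hPcov : univ.biUnion P = univ) (hQcov : univ.biUnion Q = univ)
    (hsum : ∀ l, ∑ i ∈ P l, a i = ∑ j ∈ Q l, b j) :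
    ∃ k : ℕ, 0 < k ∧ ∃ y, IsFlow (fun i => k * a i) (fun j => k * b j) y ∧
      numComponents (edgeSupport y) = d ∧
      (m + n ≤ ∑ i, a i + d → #(edgeSupport y) + d = m + n) ∧
      (∑ i, a i + d < m + n → #(edgeSupport y) + d = m + n + 1) := by
  obtain ⟨x₀, hx₀, hforest, hdx₀⟩ := exists_isFlow_forest_of_partition P Q hPne hPdisj hQdisj
    hPcov hQcov (fun i => (ha i).le) (fun j => (hb j).le) hsum
  by_cases hA : m + n ≤ ∑ i, a i + d
  · obtain ⟨y, hy, hyd, hycard⟩ := hx₀.exists_numComponents_eq ha hb (hx₀.entriesCoprime hcop)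
      hd hdx₀ (by rw [hforest]; exact_mod_cast hA)
    exact ⟨1, one_pos, y, by simpa using hy, hyd, fun _ => by omega,
      fun h => absurd hA (by omega)⟩
  · obtain ⟨y, hy, hyd, hycard⟩ := hx₀.exists_unicyclic ha hb hd hforest hdx₀ (by omega)
    exact ⟨2, two_pos, y, by simpa using hy, hyd, fun h => absurd h hA, fun _ => hycard⟩

end Merging

section Realization

open Finset

variable {m n : ℕ} {a : Fin m → ℤ} {b : Fin n → ℤ} {x : Fin m → Fin n → ℤ}

theorem IsFlow.erpNumber_edgeSupport (hx : IsFlow a b x) {c : ℝ} (hc : 0 < c)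
    {ν : Fin m → ℝ} {μ : Fin n → ℝ} (hν : ∀ i, ν i = c * a i) (hμ : ∀ j, μ j = c * b j) :
    (transportationPolytope ν μ (edgeSupport x)).Nonempty ∧
      erpNumber ν μ (edgeSupport x) = numComponents (edgeSupport x) := by
  have hmem : (fun i j => c * x i j) ∈ transportationPolytope ν μ (edgeSupport x) := by
    refine ⟨fun i j => by have := hx.nonneg i j; positivity, fun i => ?_, fun j => ?_,
      fun i j h => by simp [show x i j = 0 by simpa using h]⟩
    · rw [hν, ← hx.sum_row, ← mul_sum]; push_cast; rfl
    · rw [hμ, ← hx.sum_col, ← mul_sum]; push_cast; rfl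
  have hred : redundantEdges ν μ (edgeSupport x) = ∅ := by
    refine filter_eq_empty_iff.2 fun e he h => ?_
    have := h _ hmem
    simp only [mul_eq_zero, hc.ne', false_or, Int.cast_eq_zero] at this
    exact mem_edgeSupport.1 he this
  refine ⟨⟨_, hmem⟩, ?_⟩
  rw [erpNumber, hred, sdiff_empty]

end Realization

section GcdVec

open Finset

variable {m n : ℕ} (ν : Fin m → ℕ) (μ : Fin n → ℕ)

theorem gcdVec_dvd_left (i : Fin m) : gcdVec ν μ ∣ ν i :=
  (Nat.gcd_dvd_left _ _).trans (gcd_dvd (mem_univ i))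

theorem gcdVec_dvd_right (j : Fin n) : gcdVec ν μ ∣ μ j :=
  (Nat.gcd_dvd_right _ _).trans (gcd_dvd (mem_univ j))

theorem isUnit_of_dvd_of_eq_gcdVec_mul (hg : 0 < gcdVec ν μ) {a : Fin m → ℕ} {b : Fin n → ℕ}
    (ha : ∀ i, ν i = gcdVec ν μ * a i) (hb : ∀ j, μ j = gcdVec ν μ * b j) {w : ℤ}
    (hwa : ∀ i, w ∣ a i) (hwb : ∀ j, w ∣ b j) : IsUnit w := by
  have key {k : ℕ} (hw : w ∣ k) : gcdVec ν μ * w.natAbs ∣ gcdVec ν μ * k :=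
    mul_dvd_mul_left _ (by simpa only [Int.natAbs_natCast] using Int.natAbs_dvd_natAbs.2 hw)
  have hdvd : gcdVec ν μ * w.natAbs ∣ gcdVec ν μ * 1 := by
    rw [mul_one]
    exact Nat.dvd_gcd (dvd_gcd fun i _ => ha i ▸ key (hwa i))
      (dvd_gcd fun j _ => hb j ▸ key (hwb j))
  exact Int.isUnit_iff_natAbs_eq.2 (Nat.dvd_one.1 (Nat.dvd_of_mul_dvd_mul_left hg hdvd))

end GcdVec

theorem stmt_8_general {m n : ℕ}
    (ν : Fin m → ℕ) (μ : Fin n → ℕ)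
    (hν : ∀ i, 0 < ν i) (hμ : ∀ j, 0 < μ j)
    (d : ℕ) (hd : 1 ≤ d)
    (P : Fin d → Finset (Fin m)) (Q : Fin d → Finset (Fin n))
    (hPne : ∀ l, (P l).Nonempty)
    (hPdisj : ∀ l₁ l₂, l₁ ≠ l₂ → Disjoint (P l₁) (P l₂))
    (hQdisj : ∀ l₁ l₂, l₁ ≠ l₂ → Disjoint (Q l₁) (Q l₂))
    (hPcov : Finset.univ.biUnion P = Finset.univ)
    (hQcov : Finset.univ.biUnion Q = Finset.univ)
    (hsum : ∀ l, (∑ i ∈ P l, ν i) = ∑ j ∈ Q l, μ j) :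
    ∃ E : Finset (Fin m × Fin n),
      (transportationPolytope (fun i => (ν i : ℝ)) (fun j => (μ j : ℝ)) E).Nonempty ∧
      erpNumber (fun i => (ν i : ℝ)) (fun j => (μ j : ℝ)) E = d ∧
      (dStar ν μ ≤ d → E.card + d = m + n) ∧
      (d < dStar ν μ → E.card + d = m + n + 1) := by
  obtain ⟨i₀⟩ : Nonempty (Fin m) := ⟨(hPne ⟨0, hd⟩).choose⟩
  have hg : 0 < gcdVec ν μ := Nat.pos_of_dvd_of_pos (gcdVec_dvd_left ν μ i₀) (hν i₀)
  choose a ha using gcdVec_dvd_left ν μ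
  choose b hb using gcdVec_dvd_right ν μ
  have hapos : ∀ i, 0 < (a i : ℤ) := fun i => by
    have := hν i; rw [ha] at this; exact_mod_cast Nat.pos_of_mul_pos_left this
  have hbpos : ∀ j, 0 < (b j : ℤ) := fun j => by
    have := hμ j; rw [hb] at this; exact_mod_cast Nat.pos_of_mul_pos_left this
  have hsum' : ∀ l, ∑ i ∈ P l, (a i : ℤ) = ∑ j ∈ Q l, (b j : ℤ) := fun l => by
    have := hsum l
    simp only [ha, hb, ← Finset.mul_sum] at this
    exact_mod_cast Nat.eq_of_mul_eq_mul_left hg this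
  obtain ⟨k, hk, y, hy, hyd, hA, hB⟩ := exists_isFlow_numComponents_eq_of_partition hd hapos hbpos
    (fun w => isUnit_of_dvd_of_eq_gcdVec_mul ν μ hg ha hb) P Q hPne hPdisj hQdisj hPcov hQcov hsum'
  obtain ⟨hne, herp⟩ := hy.erpNumber_edgeSupport (ν := fun i => (ν i : ℝ))
    (μ := fun j => (μ j : ℝ)) (c := gcdVec ν μ / k) (by positivity)
    (fun i => by rw [ha]; field_simp; push_cast; ring)
    (fun j => by rw [hb]; field_simp; push_cast; ring)
  have hdStar : dStar ν μ = max 1 (m + n - ∑ i, a i) := by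
    simp only [dStar, ha, ← Finset.mul_sum, Nat.mul_div_cancel_left _ hg]
  rw [hdStar]
  refine ⟨_, hne, herp.trans hyd, fun h => hA ?_, fun h => hB ?_⟩
  · exact_mod_cast (by omega : m + n ≤ ∑ i, a i + d)
  · exact_mod_cast (by omega : ∑ i, a i + d < m + n)

/-- sufficiency: given compatible partitions of `I` and `J` into `d` blocks with
matching block sums, there is an edge set `E` with nonempty `T_E(ν,μ)`, ERP number `d`, and
`|E| = m + n − d` if `d ≥ d_⋆`, resp. `|E| = m + n − d + 1` if `d < d_⋆`. -/
theorem stmt_8 {m n : ℕ} (hm : 1 ≤ m) (hn : 1 ≤ n)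
    (ν : Fin m → ℕ) (μ : Fin n → ℕ)
    (hν : ∀ i, 0 < ν i) (hμ : ∀ j, 0 < μ j)
    (htot : (∑ i, ν i) = ∑ j, μ j)
    (d : ℕ) (hd : 1 ≤ d)
    (P : Fin d → Finset (Fin m)) (Q : Fin d → Finset (Fin n))
    (hPne : ∀ l, (P l).Nonempty) (hQne : ∀ l, (Q l).Nonempty)
    (hPdisj : ∀ l₁ l₂, l₁ ≠ l₂ → Disjoint (P l₁) (P l₂))
    (hQdisj : ∀ l₁ l₂, l₁ ≠ l₂ → Disjoint (Q l₁) (Q l₂))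
    (hPcov : Finset.univ.biUnion P = Finset.univ)
    (hQcov : Finset.univ.biUnion Q = Finset.univ)
    (hsum : ∀ l, (∑ i ∈ P l, ν i) = ∑ j ∈ Q l, μ j) :
    ∃ E : Finset (Fin m × Fin n),
      (transportationPolytope (fun i => (ν i : ℝ)) (fun j => (μ j : ℝ)) E).Nonempty ∧
      erpNumber (fun i => (ν i : ℝ)) (fun j => (μ j : ℝ)) E = d ∧
      (dStar ν μ ≤ d → E.card + d = m + n) ∧
      (d < dStar ν μ → E.card + d = m + n + 1) :=
  stmt_8_general ν μ hν hμ d hd P Q hPne hPdisj hQdisj hPcov hQcov hsum
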